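/- arXiv:1608.07450 — 2 statements merged into one kernel-verified Lean document; each statement's English description precedes it below -/
import Mathlib

section
/- Let ω : ℝ → ℝ³ be continuous and K, L be 3×3 real matrices whose symmetric parts are positive definite with least eigenvalues σ_K, σ_L > 0. Consider the cascade system ė_v = e_v × ω + e_γ − K e_v, ė_γ = e_γ × ω − L e_γ. Then for any 0 < ε < 2·min(σ_K, σ_L), the function V(e_v, e_γ) = |e_γ|²/2 + (ε²/2)|e_v|² satisfies V̇ ≤ −(σ_L − ε/2)|e_γ|² − ε²(σ_K − ε/2)|e_v|² along solutions, so the origin is globally exponentially stable. -/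
open Matrix
open scoped Matrix

infixl:74 " ×₃ " => crossProduct

/-- Euclidean norm on `Fin 3 → ℝ`. -/
noncomputable def enorm3 (x : Fin 3 → ℝ) : ℝ := Real.sqrt (x ⬝ᵥ x)

/-!
The rotation terms `e × ω` are orthogonal to `e`, so they drop out of `V̇`. The damping terms
are bounded by `σ_K |e_v|²` and `σ_L |e_γ|²`, since `⟪x, K x⟫` only sees the symmetric part of `K`,
and the coupling `ε² ⟪e_v, e_γ⟫` is absorbed by Young's inequality. As `V` is comparable to
`|e_v|² + |e_γ|²`, the resulting bound `V̇ ≤ -2λV` with `λ = min σ_K σ_L - ε / 2` gives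
exponential decay by Grönwall's inequality.
-/

open Real

section DotProduct

variable {n : Type*} [Fintype n]

theorem dotProduct_self_nonneg (x : n → ℝ) : 0 ≤ x ⬝ᵥ x := by
  simpa using dotProduct_self_star_nonneg x

theorem two_mul_mul_dotProduct_le (c : ℝ) (x y : n → ℝ) :
    2 * c * (x ⬝ᵥ y) ≤ c ^ 2 * (x ⬝ᵥ x) + y ⬝ᵥ y := by
  have h := dotProduct_self_nonneg (c • x - y)
  simp only [dotProduct_sub, sub_dotProduct, dotProduct_smul, smul_dotProduct, smul_eq_mul,
    dotProduct_comm y x] at h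
  linarith

theorem HasDerivAt.dotProduct_self {f : ℝ → n → ℝ} {f' : n → ℝ} {t : ℝ}
    (hf : HasDerivAt f f' t) :
    HasDerivAt (fun s => f s ⬝ᵥ f s) (2 * (f t ⬝ᵥ f')) t := by
  have h := hasDerivAt_pi.mp hf
  have hsum : HasDerivAt (fun s => f s ⬝ᵥ f s) (∑ i, (f' i * f t i + f t i * f' i)) t :=
    HasDerivAt.fun_sum fun i _ => (h i).mul (h i)
  refine hsum.congr_deriv ?_
  simp only [dotProduct, Finset.mul_sum]
  exact Finset.sum_congr rfl fun i _ => by ring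

end DotProduct

namespace Matrix

variable {n : Type*}

theorem isHermitian_half_smul_add_transpose (M : Matrix n n ℝ) :
    ((1 / 2 : ℝ) • (M + Mᵀ)).IsHermitian := by
  rw [IsHermitian, conjTranspose_eq_transpose_of_trivial, transpose_smul, transpose_add,
    transpose_transpose, add_comm]

variable [Fintype n]

theorem IsHermitian.mul_dotProduct_self_le [DecidableEq n] {S : Matrix n n ℝ}
    (hS : S.IsHermitian) {σ : ℝ} (hσ : ∀ μ ∈ spectrum ℝ S, σ ≤ μ) (x : n → ℝ) :
    σ * (x ⬝ᵥ x) ≤ x ⬝ᵥ (S *ᵥ x) := by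
  have hT : (S - algebraMap ℝ _ σ).IsHermitian := by
    rw [Algebra.algebraMap_eq_smul_one]; exact hS.sub (isHermitian_one.smul (IsSelfAdjoint.all σ))
  have hpsd : (S - algebraMap ℝ _ σ).PosSemidef := by
    refine hT.posSemidef_iff_eigenvalues_nonneg.mpr fun j => ?_
    obtain ⟨μ, hμ, _, rfl, hj⟩ :=
      spectrum.sub_singleton_eq S σ ▸ hT.eigenvalues_mem_spectrum_real j
    simp only [Pi.zero_apply, ← hj, sub_nonneg]
    exact hσ μ hμ
  have := hpsd.dotProduct_mulVec_nonneg x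
  rw [Algebra.algebraMap_eq_smul_one, star_trivial, sub_mulVec, dotProduct_sub, smul_mulVec,
    one_mulVec, dotProduct_smul, smul_eq_mul] at this
  linarith

theorem dotProduct_half_smul_add_transpose_mulVec (M : Matrix n n ℝ) (x : n → ℝ) :
    x ⬝ᵥ ((1 / 2 : ℝ) • (M + Mᵀ)) *ᵥ x = x ⬝ᵥ M *ᵥ x := by
  rw [smul_mulVec, add_mulVec, dotProduct_smul, dotProduct_add, mulVec_transpose,
    dotProduct_comm x (x ᵥ* M), ← dotProduct_mulVec, smul_eq_mul]
  ring

theorem mul_dotProduct_self_le_of_symmPart [DecidableEq n] (M : Matrix n n ℝ) {σ : ℝ}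
    (hσ : ∀ μ, Module.End.HasEigenvalue (toLin' ((1 / 2 : ℝ) • (M + Mᵀ))) μ → σ ≤ μ)
    (x : n → ℝ) : σ * (x ⬝ᵥ x) ≤ x ⬝ᵥ M *ᵥ x := by
  rw [← dotProduct_half_smul_add_transpose_mulVec]
  refine (isHermitian_half_smul_add_transpose M).mul_dotProduct_self_le (fun μ hμ => hσ μ ?_) x
  rwa [Module.End.hasEigenvalue_iff_mem_spectrum, spectrum_toLin']

end Matrix

theorem le_mul_exp_of_hasDerivAt_le_neg_mul {V V' : ℝ → ℝ} {k : ℝ}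
    (hV : ∀ t, HasDerivAt V (V' t) t) (hV' : ∀ t, V' t ≤ -k * V t) {t₀ t : ℝ} (ht : t₀ ≤ t) :
    V t ≤ V t₀ * exp (-k * (t - t₀)) := by
  have := le_gronwallBound_of_liminf_deriv_right_le (K := -k) (ε := 0)
    (fun s _ => (hV s).continuousAt.continuousWithinAt)
    (fun s _ r hr => (hV s).hasDerivWithinAt.liminf_right_slope_le hr) le_rfl
    (fun s _ => (hV' s).trans_eq (add_zero _).symm) t ⟨ht, le_rfl⟩
  rwa [gronwallBound_ε0] at this

theorem sqrt_le_mul_exp_of_lyapunov {X V V' : ℝ → ℝ} {a b k : ℝ} (ha : 0 < a)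
    (hX : ∀ t, 0 ≤ X t) (hlow : ∀ t, a * X t ≤ V t) (hup : ∀ t, V t ≤ b * X t)
    (hV : ∀ t, HasDerivAt V (V' t) t) (hV' : ∀ t, V' t ≤ -(2 * k) * V t) {t₀ t : ℝ}
    (ht : t₀ ≤ t) : √(X t) ≤ √(b / a) * exp (-k * (t - t₀)) * √(X t₀) := by
  have hdecay : X t ≤ b / a * exp (-k * (t - t₀)) ^ 2 * X t₀ := by
    have := (hlow t).trans ((le_mul_exp_of_hasDerivAt_le_neg_mul hV hV' ht).trans
      (mul_le_mul_of_nonneg_right (hup t₀) (exp_nonneg _)))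
    rw [← exp_nat_mul, div_mul_eq_mul_div, div_mul_eq_mul_div, le_div_iff₀ ha]
    convert this using 1 <;> ring_nf
  calc √(X t) ≤ √(b / a * exp (-k * (t - t₀)) ^ 2 * X t₀) := sqrt_le_sqrt hdecay
    _ = √(b / a) * exp (-k * (t - t₀)) * √(X t₀) := by
      rw [sqrt_mul' _ (hX t₀), sqrt_mul' _ (sq_nonneg _), sqrt_sq (exp_nonneg _)]

theorem cascade_lyapunov_deriv_le {n : Type*} [Fintype n] {K L : Matrix n n ℝ}
    {σK σL ε : ℝ} (hε : 0 ≤ ε) (hK : ∀ x, σK * (x ⬝ᵥ x) ≤ x ⬝ᵥ K *ᵥ x)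
    (hL : ∀ x, σL * (x ⬝ᵥ x) ≤ x ⬝ᵥ L *ᵥ x) (v γ : n → ℝ) :
    ε ^ 2 * (v ⬝ᵥ γ - v ⬝ᵥ K *ᵥ v) - γ ⬝ᵥ L *ᵥ γ ≤
      -(σL - ε / 2) * (γ ⬝ᵥ γ) - ε ^ 2 * (σK - ε / 2) * (v ⬝ᵥ v) := by
  have hyoung := mul_le_mul_of_nonneg_left (two_mul_mul_dotProduct_le ε v γ) hε
  have hKv := mul_le_mul_of_nonneg_left (hK v) (sq_nonneg ε)
  nlinarith [hL γ]

theorem hasDerivAt_cascade_lyapunov {ω ev eγ : ℝ → Fin 3 → ℝ} {K L : Matrix (Fin 3) (Fin 3) ℝ}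
    (ε : ℝ)
    (hev : ∀ t, HasDerivAt ev (ev t ×₃ ω t + eγ t - K *ᵥ ev t) t)
    (heγ : ∀ t, HasDerivAt eγ (eγ t ×₃ ω t - L *ᵥ eγ t) t) (t : ℝ) :
    HasDerivAt (fun s => eγ s ⬝ᵥ eγ s / 2 + ε ^ 2 / 2 * (ev s ⬝ᵥ ev s))
      (ε ^ 2 * (ev t ⬝ᵥ eγ t - ev t ⬝ᵥ K *ᵥ ev t) - eγ t ⬝ᵥ L *ᵥ eγ t) t := by
  refine (((heγ t).dotProduct_self.div_const 2).add
    ((hev t).dotProduct_self.const_mul (ε ^ 2 / 2))).congr_deriv ?_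
  simp only [dotProduct_add, dotProduct_sub, dot_self_cross]
  ring

theorem cascade_lyapunov_general (ω : ℝ → Fin 3 → ℝ)
    (K L : Matrix (Fin 3) (Fin 3) ℝ)
    (σK σL : ℝ)
    (hσK : IsLeast {μ : ℝ |
      Module.End.HasEigenvalue (Matrix.toLin' ((1 / 2 : ℝ) • (K + Kᵀ))) μ} σK)
    (hσL : IsLeast {μ : ℝ |
      Module.End.HasEigenvalue (Matrix.toLin' ((1 / 2 : ℝ) • (L + Lᵀ))) μ} σL)
    (ε : ℝ) (hε : 0 < ε) (hε' : ε < 2 * min σK σL)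
    (ev eγ : ℝ → Fin 3 → ℝ)
    (hev : ∀ t, HasDerivAt ev (ev t ×₃ ω t + eγ t - K *ᵥ ev t) t)
    (heγ : ∀ t, HasDerivAt eγ (eγ t ×₃ ω t - L *ᵥ eγ t) t) :
    (∃ d : ℝ → ℝ, ∀ t,
      HasDerivAt (fun s => eγ s ⬝ᵥ eγ s / 2 + ε ^ 2 / 2 * (ev s ⬝ᵥ ev s)) (d t) t ∧
      d t ≤ -(σL - ε / 2) * (eγ t ⬝ᵥ eγ t) - ε ^ 2 * (σK - ε / 2) * (ev t ⬝ᵥ ev t)) ∧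
    ∃ c > 0, ∃ lam > 0, ∀ t₀ t, t₀ ≤ t →
      Real.sqrt (ev t ⬝ᵥ ev t + eγ t ⬝ᵥ eγ t) ≤
        c * Real.exp (-lam * (t - t₀)) * Real.sqrt (ev t₀ ⬝ᵥ ev t₀ + eγ t₀ ⬝ᵥ eγ t₀) := by
  have hK := mul_dotProduct_self_le_of_symmPart K fun μ hμ => hσK.2 hμ
  have hL := mul_dotProduct_self_le_of_symmPart L fun μ hμ => hσL.2 hμ
  have hV := hasDerivAt_cascade_lyapunov ε hev heγ
  have hV' t := cascade_lyapunov_deriv_le hε.le hK hL (ev t) (eγ t)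
  have hv t := dotProduct_self_nonneg (ev t)
  have hγ t := dotProduct_self_nonneg (eγ t)
  have hm : 0 < min 1 (ε ^ 2) := lt_min one_pos (by positivity)
  refine ⟨⟨_, fun t => ⟨hV t, hV' t⟩⟩, √(max 1 (ε ^ 2) / 2 / (min 1 (ε ^ 2) / 2)),
    sqrt_pos.mpr (by positivity), min σK σL - ε / 2, by linarith,
    fun t₀ t ht => sqrt_le_mul_exp_of_lyapunov (half_pos hm) (fun s => add_nonneg (hv s) (hγ s))
      (fun s => ?_) (fun s => ?_) hV (fun s => ?_) ht⟩
  · nlinarith [min_le_left 1 (ε ^ 2), min_le_right 1 (ε ^ 2), hv s, hγ s]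
  · nlinarith [le_max_left 1 (ε ^ 2), le_max_right 1 (ε ^ 2), hv s, hγ s]
  · linarith [hV' s, mul_le_mul_of_nonneg_right (min_le_right σK σL) (hγ s),
      mul_le_mul_of_nonneg_right (min_le_left σK σL) (mul_nonneg (sq_nonneg ε) (hv s))]

theorem cascade_lyapunov (ω : ℝ → Fin 3 → ℝ) (hω : Continuous ω)
    (K L : Matrix (Fin 3) (Fin 3) ℝ)
    (hK : ((1 / 2 : ℝ) • (K + Kᵀ)).PosDef)
    (hL : ((1 / 2 : ℝ) • (L + Lᵀ)).PosDef)
    (σK σL : ℝ) (hσKpos : 0 < σK) (hσLpos : 0 < σL)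
    (hσK : IsLeast {μ : ℝ |
      Module.End.HasEigenvalue (Matrix.toLin' ((1 / 2 : ℝ) • (K + Kᵀ))) μ} σK)
    (hσL : IsLeast {μ : ℝ |
      Module.End.HasEigenvalue (Matrix.toLin' ((1 / 2 : ℝ) • (L + Lᵀ))) μ} σL)
    (ε : ℝ) (hε : 0 < ε) (hε' : ε < 2 * min σK σL)
    (ev eγ : ℝ → Fin 3 → ℝ)
    (hev : ∀ t, HasDerivAt ev (ev t ×₃ ω t + eγ t - K *ᵥ ev t) t)
    (heγ : ∀ t, HasDerivAt eγ (eγ t ×₃ ω t - L *ᵥ eγ t) t) :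
    (∃ d : ℝ → ℝ, ∀ t,
      HasDerivAt (fun s => eγ s ⬝ᵥ eγ s / 2 + ε ^ 2 / 2 * (ev s ⬝ᵥ ev s)) (d t) t ∧
      d t ≤ -(σL - ε / 2) * (eγ t ⬝ᵥ eγ t) - ε ^ 2 * (σK - ε / 2) * (ev t ⬝ᵥ ev t)) ∧
    ∃ c > 0, ∃ lam > 0, ∀ t₀ t, t₀ ≤ t →
      Real.sqrt (ev t ⬝ᵥ ev t + eγ t ⬝ᵥ eγ t) ≤
        c * Real.exp (-lam * (t - t₀)) * Real.sqrt (ev t₀ ⬝ᵥ ev t₀ + eγ t₀ ⬝ᵥ eγ t₀) :=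
  cascade_lyapunov_general ω K L σK σL hσK hσL ε hε hε' ev eγ hev heγ
end

section
/- Let ω, a, v_m, β_m : ℝ → ℝ³ with v_m = v, β_m = β for the true states, and let (v, γ, β) solve v̇ = v × ω + γ + a, γ̇ = γ × ω, β̇ = β × ω. Let (v̂, γ̂, β̂) solve the observer equations v̂̇ = v̂ × ω + a + γ̂ − (L+K)(v̂ − v), γ̂̇ = γ̂ × ω − (L S(ω) − S(ω) L + L K)(v̂ − v), β̂̇ = β̂ × ω − M(β̂ − β), where K, L, M are constant 3×3 matrices. Then the error variables e_v := v̂ − v, e_γ := γ̂ − γ − L e_v, e_β := β̂ − β satisfy ė_v = e_v × ω + e_γ − K e_v, ė_γ = e_γ × ω − L e_γ, ė_β = e_β × ω − M e_β. -/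
open Matrix
open scoped Matrix

/-!
Each error equation is the difference of the observer and plant equations, rearranged using the
linearity of `x ↦ x ⨯₃ ω` and of `x ↦ L *ᵥ x`. The only non-trivial point is `e_γ`, which contains
`L e_v`: differentiating it produces `L (e_v ⨯₃ ω)` where the rotating-frame law needs
`(L e_v) ⨯₃ ω`, and the gain `L S(ω) - S(ω) L` in the observer is exactly this commutator,
`(L S(ω) - S(ω) L) x = (L x) ⨯₃ ω - L (x ⨯₃ ω)`.
-/

/-- The hat map: the skew-symmetric matrix `S ω` with `S ω *ᵥ x = ω ⨯₃ x`. -/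
def hatMap (ω : Fin 3 → ℝ) : Matrix (Fin 3) (Fin 3) ℝ :=
  !![0, -ω 2, ω 1; ω 2, 0, -ω 0; -ω 1, ω 0, 0]

theorem sub_cross {R : Type*} [CommRing R] (x y w : Fin 3 → R) :
    (x - y) ⨯₃ w = x ⨯₃ w - y ⨯₃ w :=
  LinearMap.map_sub₂ _ _ _ _

theorem hatMap_mulVec (ω x : Fin 3 → ℝ) : hatMap ω *ᵥ x = ω ⨯₃ x := by
  ext i
  fin_cases i <;> simp [hatMap, cross_apply, mulVec, dotProduct, Fin.sum_univ_three] <;> ring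

theorem mulVec_cross_sub_cross_mulVec (L : Matrix (Fin 3) (Fin 3) ℝ) (ω x : Fin 3 → ℝ) :
    (L * hatMap ω - hatMap ω * L) *ᵥ x = (L *ᵥ x) ⨯₃ ω - L *ᵥ (x ⨯₃ ω) := by
  rw [sub_mulVec, ← mulVec_mulVec, ← mulVec_mulVec, hatMap_mulVec, hatMap_mulVec,
    ← cross_anticomm x, ← cross_anticomm (L *ᵥ x), mulVec_neg, sub_neg_eq_add, neg_add_eq_sub]

theorem HasDerivAt.matrix_mulVec {𝕜 : Type*} [NontriviallyNormedField 𝕜] [CompleteSpace 𝕜]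
    {m n : Type*} [Fintype m] [Fintype n] (A : Matrix m n 𝕜) {f : 𝕜 → n → 𝕜}
    {f' : n → 𝕜} {t : 𝕜} (hf : HasDerivAt f f' t) :
    HasDerivAt (fun s => A *ᵥ f s) (A *ᵥ f') t :=
  (A.mulVecLin.toContinuousLinearMap.hasFDerivAt).comp_hasDerivAt t hf

theorem observer_error_dynamics
    (ω a v γ β vh γh βh : ℝ → Fin 3 → ℝ)
    (K L M : Matrix (Fin 3) (Fin 3) ℝ)
    (hv : ∀ t, HasDerivAt v (v t ⨯₃ ω t + γ t + a t) t)
    (hγ : ∀ t, HasDerivAt γ (γ t ⨯₃ ω t) t)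
    (hβ : ∀ t, HasDerivAt β (β t ⨯₃ ω t) t)
    (hvh : ∀ t, HasDerivAt vh
      (vh t ⨯₃ ω t + a t + γh t - (L + K) *ᵥ (vh t - v t)) t)
    (hγh : ∀ t, HasDerivAt γh
      (γh t ⨯₃ ω t - (L * hatMap (ω t) - hatMap (ω t) * L + L * K) *ᵥ (vh t - v t)) t)
    (hβh : ∀ t, HasDerivAt βh (βh t ⨯₃ ω t - M *ᵥ (βh t - β t)) t)
    (ev eγ eβ : ℝ → Fin 3 → ℝ)
    (hev : ev = fun t => vh t - v t)
    (heγ : eγ = fun t => γh t - γ t - L *ᵥ ev t)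
    (heβ : eβ = fun t => βh t - β t) :
    (∀ t, HasDerivAt ev (ev t ⨯₃ ω t + eγ t - K *ᵥ ev t) t) ∧
    (∀ t, HasDerivAt eγ (eγ t ⨯₃ ω t - L *ᵥ eγ t) t) ∧
    (∀ t, HasDerivAt eβ (eβ t ⨯₃ ω t - M *ᵥ eβ t) t) := by
  subst hev heγ heβ
  have hev : ∀ t, HasDerivAt (fun t => vh t - v t)
      ((vh t - v t) ⨯₃ ω t + (γh t - γ t - L *ᵥ (vh t - v t)) - K *ᵥ (vh t - v t)) t :=
    fun t => ((hvh t).sub (hv t)).congr_deriv (by simp only [sub_cross, add_mulVec]; abel)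
  refine ⟨hev, fun t => ?_, fun t => ?_⟩
  · refine (((hγh t).sub (hγ t)).sub ((hev t).matrix_mulVec L)).congr_deriv ?_
    simp only [add_mulVec, mulVec_cross_sub_cross_mulVec, sub_cross, mulVec_sub, mulVec_add,
      mulVec_mulVec]
    abel
  · exact ((hβh t).sub (hβ t)).congr_deriv (by simp only [sub_cross, mulVec_sub]; abel)
end
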